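/- If a is a closed term of Λ× whose type is in product normal form, then its expanded βη normal form a^ν is either of the form Π_{i=1}^n a_i (iterated pairing) with each a_i a term of Λ (containing no product or T types, no pairing, no projections and no k), or a^ν is the constant k. -/
import Mathlib


set_option autoImplicit false

/-- Simple types over a set `ν` of atomic types. -/
inductive Ty (ν : Type) : Type
  | atom : ν → Ty ν
  | arrow : Ty ν → Ty ν → Ty ν

/-- A typing context: the (types of the) free variables. -/
abbrev Ctx (ν : Type) : Type := List (Ty ν)

/-- Typed de Bruijn variables. -/
inductive Var {ν : Type} : Ctx ν → Ty ν → Type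
  | vz {Γ : Ctx ν} {A : Ty ν} : Var (A :: Γ) A
  | vs {Γ : Ctx ν} {A B : Ty ν} : Var Γ A → Var (B :: Γ) A

/-- Typed terms of the simply typed lambda calculus Λ. -/
inductive Tm {ν : Type} : Ctx ν → Ty ν → Type
  | var {Γ : Ctx ν} {A : Ty ν} : Var Γ A → Tm Γ A
  | app {Γ : Ctx ν} {A B : Ty ν} : Tm Γ (Ty.arrow A B) → Tm Γ A → Tm Γ B
  | lam {Γ : Ctx ν} {A B : Ty ν} : Tm (A :: Γ) B → Tm Γ (Ty.arrow A B)

/-- Renamings between contexts. -/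
def Ren {ν : Type} (Γ Δ : Ctx ν) : Type := ∀ A : Ty ν, Var Γ A → Var Δ A

def Ren.ext {ν : Type} {Γ Δ : Ctx ν} (ρ : Ren Γ Δ) (A : Ty ν) : Ren (A :: Γ) (A :: Δ) :=
  fun _ v => match v with
  | .vz => .vz
  | .vs w => .vs (ρ _ w)

def Tm.rename {ν : Type} : ∀ {Γ Δ : Ctx ν} {A : Ty ν}, Ren Γ Δ → Tm Γ A → Tm Δ A
  | _, _, _, ρ, .var v => .var (ρ _ v)
  | _, _, _, ρ, .app f a => .app (f.rename ρ) (a.rename ρ)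
  | _, _, _, ρ, .lam b => .lam (b.rename (ρ.ext _))

/-- Simultaneous substitutions. -/
def Subst {ν : Type} (Γ Δ : Ctx ν) : Type := ∀ A : Ty ν, Var Γ A → Tm Δ A

def Subst.ext {ν : Type} {Γ Δ : Ctx ν} (σ : Subst Γ Δ) (A : Ty ν) :
    ∀ B : Ty ν, Var (A :: Γ) B → Tm (A :: Δ) B
  | _, .vz => .var .vz
  | _, .vs w => (σ _ w).rename (fun _ => Var.vs)

def Tm.subst {ν : Type} : ∀ {Γ Δ : Ctx ν} {A : Ty ν}, Subst Γ Δ → Tm Γ A → Tm Δ A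
  | _, _, _, σ, .var v => σ _ v
  | _, _, _, σ, .app f a => .app (f.subst σ) (a.subst σ)
  | _, _, _, σ, .lam b => .lam (b.subst (Subst.ext σ _))

/-- Extending a substitution with a term for the last variable. -/
def Subst.cons {ν : Type} {Γ Δ : Ctx ν} {A : Ty ν} (b : Tm Δ A) (σ : Subst Γ Δ) :
    ∀ B : Ty ν, Var (A :: Γ) B → Tm Δ B
  | _, .vz => b
  | _, .vs w => σ _ w

/-- Substitution of a single term for the last variable: `a[b/x]`. -/
def Tm.subst1 {ν : Type} {Γ : Ctx ν} {A B : Ty ν} (a : Tm (A :: Γ) B) (b : Tm Γ A) : Tm Γ B :=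
  a.subst (Subst.cons b (fun _ v => .var v))

/-- The theory Λ of βη-equality. -/
inductive Eqv {ν : Type} : ∀ {Γ : Ctx ν} {A : Ty ν}, Tm Γ A → Tm Γ A → Prop
  | refl {Γ : Ctx ν} {A : Ty ν} (a : Tm Γ A) : Eqv a a
  | symm {Γ : Ctx ν} {A : Ty ν} {a b : Tm Γ A} : Eqv a b → Eqv b a
  | trans {Γ : Ctx ν} {A : Ty ν} {a b c : Tm Γ A} : Eqv a b → Eqv b c → Eqv a c
  | congApp {Γ : Ctx ν} {A B : Ty ν} {f g : Tm Γ (Ty.arrow A B)} {a b : Tm Γ A} :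
      Eqv f g → Eqv a b → Eqv (.app f a) (.app g b)
  | congLam {Γ : Ctx ν} {A B : Ty ν} {a b : Tm (A :: Γ) B} :
      Eqv a b → Eqv (.lam a) (.lam b)
  | beta {Γ : Ctx ν} {A B : Ty ν} (a : Tm (A :: Γ) B) (b : Tm Γ A) :
      Eqv (.app (.lam a) b) (a.subst1 b)
  | eta {Γ : Ctx ν} {A B : Ty ν} (a : Tm Γ (Ty.arrow A B)) :
      Eqv (.lam (.app (a.rename (fun _ => Var.vs)) (.var .vz))) a

/-- Substitution of types for the atomic types, on types. -/
def Ty.substA {ν : Type} (σ : ν → Ty ν) : Ty ν → Ty ν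
  | .atom v => σ v
  | .arrow A B => .arrow (A.substA σ) (B.substA σ)

def Var.substA {ν : Type} (σ : ν → Ty ν) :
    ∀ {Γ : Ctx ν} {A : Ty ν}, Var Γ A → Var (Γ.map (Ty.substA σ)) (A.substA σ)
  | _, _, .vz => .vz
  | _, _, .vs v => .vs (v.substA σ)

/-- Substitution of types for the atomic types, on terms: type-instances. -/
def Tm.substA {ν : Type} (σ : ν → Ty ν) :
    ∀ {Γ : Ctx ν} {A : Ty ν}, Tm Γ A → Tm (Γ.map (Ty.substA σ)) (A.substA σ)
  | _, _, .var v => .var (v.substA σ)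
  | _, _, .app f a => .app (f.substA σ) (a.substA σ)
  | _, _, .lam b => .lam (b.substA σ)

/-- `Ty.arrs [A₁, …, Aₘ] B = Aₘ → (… → (A₁ → B))` : the type of `λx₁…xₘ.a`. -/
def Ty.arrs {ν : Type} : Ctx ν → Ty ν → Ty ν
  | [], B => B
  | A :: Γ, B => Ty.arrs Γ (Ty.arrow A B)

/-- λ-abstracting all the free variables of a term. -/
def Tm.lamAll {ν : Type} : ∀ {Γ : Ctx ν} {A : Ty ν}, Tm Γ A → Tm [] (Ty.arrs Γ A)
  | [], _, a => a
  | _ :: Γ, _, a => Tm.lamAll (Γ := Γ) (Tm.lam a)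

/-- `Ty.arrsR [B₁, …, Bₙ] C = B₁ → (… → (Bₙ → C))`. -/
def Ty.arrsR {ν : Type} : List (Ty ν) → Ty ν → Ty ν
  | [], C => C
  | B :: Bs, C => Ty.arrow B (Ty.arrsR Bs C)

/-- A list of terms `h₁ : B₁, …, hₙ : Bₙ` in context `Δ`. -/
inductive HList {ν : Type} (Δ : Ctx ν) : List (Ty ν) → Type
  | nil : HList Δ []
  | cons {B : Ty ν} {Bs : List (Ty ν)} : Tm Δ B → HList Δ Bs → HList Δ (B :: Bs)

/-- Iterated application `t h₁ … hₙ`. -/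
def HList.apps {ν : Type} {Δ : Ctx ν} :
    ∀ {Bs : List (Ty ν)} {C : Ty ν}, HList Δ Bs → Tm Δ (Ty.arrsR Bs C) → Tm Δ C
  | _, _, .nil, t => t
  | _, _, .cons h hs, t => HList.apps hs (t.app h)

/-- Iterated application `t h₁ … hₙ`. -/
def Tm.apps {ν : Type} {Δ : Ctx ν} {Bs : List (Ty ν)} {C : Ty ν}
    (t : Tm Δ (Ty.arrsR Bs C)) (hs : HList Δ Bs) : Tm Δ C :=
  hs.apps t

/-- Weakening of a closed term into an arbitrary context. -/
def Var.elim0 {ν : Type} {A : Ty ν} {C : Sort*} : Var ([] : Ctx ν) A → C :=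
  fun v => nomatch v

def Tm.wk {ν : Type} {Δ : Ctx ν} {A : Ty ν} (t : Tm ([] : Ctx ν) A) : Tm Δ A :=
  t.rename (fun _ v => v.elim0)

/-- Types of the typed lambda calculus Λ× : generated from atomic types (`ν`) and the
constant atomic type `T` by `→` and `×`. -/
inductive Tyx (ν : Type) : Type
  | atom : ν → Tyx ν
  | unit : Tyx ν
  | arrow : Tyx ν → Tyx ν → Tyx ν
  | prod : Tyx ν → Tyx ν → Tyx ν

/-- A typing context. -/
abbrev Ctxx (ν : Type) : Type := List (Tyx ν)

/-- Typed de Bruijn variables. -/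
inductive Varx {ν : Type} : Ctxx ν → Tyx ν → Type
  | vz {Γ : Ctxx ν} {A : Tyx ν} : Varx (A :: Γ) A
  | vs {Γ : Ctxx ν} {A B : Tyx ν} : Varx Γ A → Varx (B :: Γ) A

/-- Typed terms of Λ×. -/
inductive Tmx {ν : Type} : Ctxx ν → Tyx ν → Type
  | var {Γ : Ctxx ν} {A : Tyx ν} : Varx Γ A → Tmx Γ A
  | app {Γ : Ctxx ν} {A B : Tyx ν} : Tmx Γ (Tyx.arrow A B) → Tmx Γ A → Tmx Γ B
  | lam {Γ : Ctxx ν} {A B : Tyx ν} : Tmx (A :: Γ) B → Tmx Γ (Tyx.arrow A B)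
  | pair {Γ : Ctxx ν} {A B : Tyx ν} : Tmx Γ A → Tmx Γ B → Tmx Γ (Tyx.prod A B)
  | p1 {Γ : Ctxx ν} {A B : Tyx ν} : Tmx Γ (Tyx.prod A B) → Tmx Γ A
  | p2 {Γ : Ctxx ν} {A B : Tyx ν} : Tmx Γ (Tyx.prod A B) → Tmx Γ B
  | k {Γ : Ctxx ν} : Tmx Γ Tyx.unit

/-- Renamings between contexts. -/
def Renx {ν : Type} (Γ Δ : Ctxx ν) : Type := ∀ A : Tyx ν, Varx Γ A → Varx Δ A

def Renx.ext {ν : Type} {Γ Δ : Ctxx ν} (ρ : Renx Γ Δ) (A : Tyx ν) :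
    ∀ B : Tyx ν, Varx (A :: Γ) B → Varx (A :: Δ) B
  | _, .vz => .vz
  | _, .vs w => .vs (ρ _ w)

def Tmx.rename {ν : Type} : ∀ {Γ Δ : Ctxx ν} {A : Tyx ν}, Renx Γ Δ → Tmx Γ A → Tmx Δ A
  | _, _, _, ρ, .var v => .var (ρ _ v)
  | _, _, _, ρ, .app f a => .app (f.rename ρ) (a.rename ρ)
  | _, _, _, ρ, .lam b => .lam (b.rename (Renx.ext ρ _))
  | _, _, _, ρ, .pair a b => .pair (a.rename ρ) (b.rename ρ)
  | _, _, _, ρ, .p1 a => .p1 (a.rename ρ)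
  | _, _, _, ρ, .p2 a => .p2 (a.rename ρ)
  | _, _, _, _, .k => .k

/-- Simultaneous substitutions. -/
def Substx {ν : Type} (Γ Δ : Ctxx ν) : Type := ∀ A : Tyx ν, Varx Γ A → Tmx Δ A

def Substx.ext {ν : Type} {Γ Δ : Ctxx ν} (σ : Substx Γ Δ) (A : Tyx ν) :
    ∀ B : Tyx ν, Varx (A :: Γ) B → Tmx (A :: Δ) B
  | _, .vz => .var .vz
  | _, .vs w => (σ _ w).rename (fun _ => Varx.vs)

def Tmx.subst {ν : Type} : ∀ {Γ Δ : Ctxx ν} {A : Tyx ν}, Substx Γ Δ → Tmx Γ A → Tmx Δ A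
  | _, _, _, σ, .var v => σ _ v
  | _, _, _, σ, .app f a => .app (f.subst σ) (a.subst σ)
  | _, _, _, σ, .lam b => .lam (b.subst (Substx.ext σ _))
  | _, _, _, σ, .pair a b => .pair (a.subst σ) (b.subst σ)
  | _, _, _, σ, .p1 a => .p1 (a.subst σ)
  | _, _, _, σ, .p2 a => .p2 (a.subst σ)
  | _, _, _, _, .k => .k

def Substx.cons {ν : Type} {Γ Δ : Ctxx ν} {A : Tyx ν} (b : Tmx Δ A) (σ : Substx Γ Δ) :
    ∀ B : Tyx ν, Varx (A :: Γ) B → Tmx Δ B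
  | _, .vz => b
  | _, .vs w => σ _ w

/-- Substitution of a single term for the last variable: `a[b/x]`. -/
def Tmx.subst1 {ν : Type} {Γ : Ctxx ν} {A B : Tyx ν} (a : Tmx (A :: Γ) B) (b : Tmx Γ A) :
    Tmx Γ B :=
  a.subst (Substx.cons b (fun _ v => .var v))

/-- The theory Λ× of βη-equality with surjective pairing and terminal type `T`. -/
inductive Eqvx {ν : Type} : ∀ {Γ : Ctxx ν} {A : Tyx ν}, Tmx Γ A → Tmx Γ A → Prop
  | refl {Γ : Ctxx ν} {A : Tyx ν} (a : Tmx Γ A) : Eqvx a a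
  | symm {Γ : Ctxx ν} {A : Tyx ν} {a b : Tmx Γ A} : Eqvx a b → Eqvx b a
  | trans {Γ : Ctxx ν} {A : Tyx ν} {a b c : Tmx Γ A} : Eqvx a b → Eqvx b c → Eqvx a c
  | congApp {Γ : Ctxx ν} {A B : Tyx ν} {f g : Tmx Γ (Tyx.arrow A B)} {a b : Tmx Γ A} :
      Eqvx f g → Eqvx a b → Eqvx (.app f a) (.app g b)
  | congLam {Γ : Ctxx ν} {A B : Tyx ν} {a b : Tmx (A :: Γ) B} :
      Eqvx a b → Eqvx (.lam a) (.lam b)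
  | congPair {Γ : Ctxx ν} {A B : Tyx ν} {a a' : Tmx Γ A} {b b' : Tmx Γ B} :
      Eqvx a a' → Eqvx b b' → Eqvx (.pair a b) (.pair a' b')
  | congP1 {Γ : Ctxx ν} {A B : Tyx ν} {a b : Tmx Γ (Tyx.prod A B)} :
      Eqvx a b → Eqvx (.p1 a) (.p1 b)
  | congP2 {Γ : Ctxx ν} {A B : Tyx ν} {a b : Tmx Γ (Tyx.prod A B)} :
      Eqvx a b → Eqvx (.p2 a) (.p2 b)
  | beta {Γ : Ctxx ν} {A B : Tyx ν} (a : Tmx (A :: Γ) B) (b : Tmx Γ A) :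
      Eqvx (.app (.lam a) b) (a.subst1 b)
  | eta {Γ : Ctxx ν} {A B : Tyx ν} (a : Tmx Γ (Tyx.arrow A B)) :
      Eqvx (.lam (.app (a.rename (fun _ => Varx.vs)) (.var .vz))) a
  | prodBeta1 {Γ : Ctxx ν} {A B : Tyx ν} (a : Tmx Γ A) (b : Tmx Γ B) :
      Eqvx (.p1 (.pair a b)) a
  | prodBeta2 {Γ : Ctxx ν} {A B : Tyx ν} (a : Tmx Γ A) (b : Tmx Γ B) :
      Eqvx (.p2 (.pair a b)) b
  | prodEta {Γ : Ctxx ν} {A B : Tyx ν} (c : Tmx Γ (Tyx.prod A B)) :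
      Eqvx (.pair (.p1 c) (.p2 c)) c
  | unit {Γ : Ctxx ν} (a : Tmx Γ Tyx.unit) : Eqvx a .k

def Varx.elim0 {ν : Type} {A : Tyx ν} {C : Sort*} : Varx ([] : Ctxx ν) A → C :=
  fun v => nomatch v

/-- Weakening of a closed term into an arbitrary context. -/
def Tmx.wk {ν : Type} {Δ : Ctxx ν} {A : Tyx ν} (t : Tmx ([] : Ctxx ν) A) : Tmx Δ A :=
  t.rename (fun _ v => v.elim0)

/-- One-step reduction of types of Λ× (replacement of a redex subtype by its
contractum). -/
inductive TyStep {ν : Type} : Tyx ν → Tyx ν → Prop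
  | arrProd (A B₁ B₂ : Tyx ν) :
      TyStep (.arrow A (.prod B₁ B₂)) (.prod (.arrow A B₁) (.arrow A B₂))
  | prodArr (A₁ A₂ B : Tyx ν) :
      TyStep (.arrow (.prod A₁ A₂) B) (.arrow A₁ (.arrow A₂ B))
  | prodAssoc (A B C : Tyx ν) :
      TyStep (.prod A (.prod B C)) (.prod (.prod A B) C)
  | arrUnit (A : Tyx ν) : TyStep (.arrow A .unit) .unit
  | unitArr (B : Tyx ν) : TyStep (.arrow .unit B) B
  | prodUnit (A : Tyx ν) : TyStep (.prod A .unit) A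
  | unitProd (A : Tyx ν) : TyStep (.prod .unit A) A
  | arrL {A A' : Tyx ν} (B : Tyx ν) : TyStep A A' → TyStep (.arrow A B) (.arrow A' B)
  | arrR (A : Tyx ν) {B B' : Tyx ν} : TyStep B B' → TyStep (.arrow A B) (.arrow A B')
  | prodL {A A' : Tyx ν} (B : Tyx ν) : TyStep A A' → TyStep (.prod A B) (.prod A' B)
  | prodR (A : Tyx ν) {B B' : Tyx ν} : TyStep B B' → TyStep (.prod A B) (.prod A B')

/-- A type is in product normal form iff none of its subtypes is a redex, i.e. iff no
type reduction applies to it. -/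
def PNF {ν : Type} (A : Tyx ν) : Prop := ∀ B : Tyx ν, ¬ TyStep A B

mutual
/-- Long (expanded βη) normal forms of Λ×: at an arrow type a λ-abstraction, at a
product type a pair, at the terminal type the constant `k`, and at an atomic type a
neutral term. -/
inductive Lnf {ν : Type} : ∀ {Γ : Ctxx ν} {A : Tyx ν}, Tmx Γ A → Prop
  | lam {Γ : Ctxx ν} {A B : Tyx ν} {a : Tmx (A :: Γ) B} : Lnf a → Lnf (.lam a)
  | pair {Γ : Ctxx ν} {A B : Tyx ν} {a : Tmx Γ A} {b : Tmx Γ B} :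
      Lnf a → Lnf b → Lnf (.pair a b)
  | k {Γ : Ctxx ν} : Lnf (.k : Tmx Γ Tyx.unit)
  | neut {Γ : Ctxx ν} {q : ν} {a : Tmx Γ (.atom q)} : Neut a → Lnf a

/-- Neutral terms: a variable applied to long normal forms, possibly through
projections. -/
inductive Neut {ν : Type} : ∀ {Γ : Ctxx ν} {A : Tyx ν}, Tmx Γ A → Prop
  | var {Γ : Ctxx ν} {A : Tyx ν} (v : Varx Γ A) : Neut (.var v)
  | app {Γ : Ctxx ν} {A B : Tyx ν} {f : Tmx Γ (Tyx.arrow A B)} {a : Tmx Γ A} :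
      Neut f → Lnf a → Neut (.app f a)
  | p1 {Γ : Ctxx ν} {A B : Tyx ν} {a : Tmx Γ (Tyx.prod A B)} : Neut a → Neut (.p1 a)
  | p2 {Γ : Ctxx ν} {A B : Tyx ν} {a : Tmx Γ (Tyx.prod A B)} : Neut a → Neut (.p2 a)
end

/-- Embedding of the types of Λ into the types of Λ×. -/
def Ty.emb {ν : Type} : Ty ν → Tyx ν
  | .atom v => .atom v
  | .arrow A B => .arrow A.emb B.emb

/-- Embedding of the variables of Λ into the variables of Λ×. -/
def Var.emb {ν : Type} : ∀ {Γ : Ctx ν} {A : Ty ν}, Var Γ A → Varx (Γ.map Ty.emb) A.emb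
  | _, _, .vz => .vz
  | _, _, .vs v => .vs v.emb

/-- Embedding of the terms of Λ into the terms of Λ× : a term of Λ× "is a term of Λ"
iff it is in the image of this embedding (it then contains no product or `T` types, no
pairing, no projections and no `k`). -/
def Tm.emb {ν : Type} : ∀ {Γ : Ctx ν} {A : Ty ν}, Tm Γ A → Tmx (Γ.map Ty.emb) A.emb
  | _, _, .var v => .var v.emb
  | _, _, .app f a => .app f.emb a.emb
  | _, _, .lam b => .lam b.emb

/-- `IterPairOfLam a` : `a` is of the form `Π_{i=1}^n a_i` (iterated pairing, left
nested, `n ≥ 1`) with each `a_i` a (closed) term of Λ. -/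
inductive IterPairOfLam {ν : Type} : ∀ {A : Tyx ν}, Tmx ([] : Ctxx ν) A → Prop
  | single {A₀ : Ty ν} (a₀ : Tm ([] : Ctx ν) A₀) : IterPairOfLam a₀.emb
  | cons {A : Tyx ν} {a : Tmx ([] : Ctxx ν) A} {B₀ : Ty ν} (b₀ : Tm ([] : Ctx ν) B₀) :
      IterPairOfLam a → IterPairOfLam (.pair a b₀.emb)

/-- `IsK a` : the term `a` is the constant `k`. -/
inductive IsK {ν : Type} : ∀ {Γ : Ctxx ν} {A : Tyx ν}, Tmx Γ A → Prop
  | k {Γ : Ctxx ν} : IsK (.k : Tmx Γ Tyx.unit)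

/-! ### Auxiliary lemmas -/

lemma Ty.emb_inj {ν : Type} : ∀ {A B : Ty ν}, Ty.emb A = Ty.emb B → A = B := by
  intro A
  induction A with
  | atom q => intro B h; cases B <;> simp [Ty.emb] at h; rw [h]
  | arrow X Y ihX ihY =>
    intro B h; cases B <;> simp [Ty.emb] at h
    rw [ihX h.1, ihY h.2]

/-- Variables in an embedded context are embedded variables. -/
lemma Varx.emb_surj {ν : Type} :
    ∀ (Γ₀ : Ctx ν) {A : Tyx ν} (v : Varx (Γ₀.map Ty.emb) A),
      ∃ (A₀ : Ty ν) (v₀ : Var Γ₀ A₀), A = Ty.emb A₀ ∧ HEq v v₀.emb := by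
  intro Γ₀
  induction Γ₀ with
  | nil => intro A v; exact v.elim0
  | cons C Γ ih =>
    intro A v
    cases v with
    | vz => exact ⟨C, .vz, rfl, HEq.rfl⟩
    | vs w =>
      obtain ⟨A₀, w₀, rfl, hw⟩ := ih w
      exact ⟨A₀, .vs w₀, rfl, by rw [eq_of_heq hw]; exact HEq.rfl⟩

/-- Key lemma: closed (or embedded-context) long normal forms at embedded types are
embedded Λ-terms; neutral terms in embedded contexts have embedded types and are
embedded Λ-terms. -/
lemma key {ν : Type} :
    ∀ {Γ : Ctxx ν} {A : Tyx ν} (b : Tmx Γ A) (Γ₀ : Ctx ν), Γ = Γ₀.map Ty.emb →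
      (Neut b → ∃ (A₀ : Ty ν) (b₀ : Tm Γ₀ A₀), A = Ty.emb A₀ ∧ HEq b b₀.emb) ∧
      (∀ A₀ : Ty ν, A = Ty.emb A₀ → Lnf b → ∃ b₀ : Tm Γ₀ A₀, HEq b b₀.emb) := by
  intro Γ A b
  induction b with
  | var v =>
    intro Γ₀ hΓ; subst hΓ
    constructor
    · intro _
      obtain ⟨A₀, v₀, rfl, hv⟩ := Varx.emb_surj Γ₀ v
      exact ⟨A₀, .var v₀, rfl, by rw [eq_of_heq hv]; exact HEq.rfl⟩
    · intro A₀ hA _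
      obtain ⟨A₁, v₀, hA₁, hv⟩ := Varx.emb_surj Γ₀ v
      obtain rfl : A₀ = A₁ := Ty.emb_inj (hA.symm.trans hA₁)
      subst hA₁
      exact ⟨.var v₀, by rw [eq_of_heq hv]; exact HEq.rfl⟩
  | @app _ X Y f a ihf iha =>
    intro Γ₀ hΓ; subst hΓ
    have neutPart : Neut (f.app a) →
        ∃ (A₀ : Ty ν) (b₀ : Tm Γ₀ A₀), Y = Ty.emb A₀ ∧ HEq (f.app a) b₀.emb := by
      intro hn
      cases hn with
      | app hnf hla =>
        obtain ⟨C₀, f₀, hC, hf⟩ := (ihf Γ₀ rfl).1 hnf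
        cases C₀ with
        | atom q => simp [Ty.emb] at hC
        | arrow A₀ B₀ =>
          simp only [Ty.emb] at hC
          injection hC with h1 h2
          subst h1; subst h2
          obtain ⟨a₀, ha⟩ := (iha Γ₀ rfl).2 A₀ rfl hla
          exact ⟨B₀, .app f₀ a₀, rfl, by rw [eq_of_heq hf, eq_of_heq ha]; exact HEq.rfl⟩
    refine ⟨neutPart, ?_⟩
    intro A₀ hA hl
    cases hl with
    | neut hn =>
      obtain ⟨A₁, b₀, hA₁, hb⟩ := neutPart hn
      obtain rfl : A₀ = A₁ := Ty.emb_inj (hA.symm.trans hA₁)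
      exact ⟨b₀, hb⟩
  | lam body ihb =>
    intro Γ₀ hΓ; subst hΓ
    constructor
    · intro hn; cases hn
    · intro A₀ hA hl
      cases A₀ with
      | atom q => simp [Ty.emb] at hA
      | arrow X₀ Y₀ =>
        simp only [Ty.emb] at hA
        injection hA with h1 h2
        subst h1; subst h2
        cases hl with
        | lam hbody =>
          obtain ⟨body₀, hb⟩ := (ihb (X₀ :: Γ₀) rfl).2 Y₀ rfl hbody
          exact ⟨.lam body₀, by rw [eq_of_heq hb]; exact HEq.rfl⟩
  | pair x y ihx ihy =>
    intro Γ₀ hΓ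
    constructor
    · intro hn; cases hn
    · intro A₀ hA _; cases A₀ <;> simp [Ty.emb] at hA
  | p1 c ihc =>
    intro Γ₀ hΓ; subst hΓ
    have noNeut : ¬ Neut c.p1 := by
      intro hn
      cases hn with
      | p1 hnc =>
        obtain ⟨C₀, _, hC, _⟩ := (ihc Γ₀ rfl).1 hnc
        cases C₀ <;> simp [Ty.emb] at hC
    refine ⟨fun hn => absurd hn noNeut, ?_⟩
    intro A₀ _ hl
    cases hl with
    | neut hn => exact absurd hn noNeut
  | p2 c ihc =>
    intro Γ₀ hΓ; subst hΓ
    have noNeut : ¬ Neut c.p2 := by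
      intro hn
      cases hn with
      | p2 hnc =>
        obtain ⟨C₀, _, hC, _⟩ := (ihc Γ₀ rfl).1 hnc
        cases C₀ <;> simp [Ty.emb] at hC
    refine ⟨fun hn => absurd hn noNeut, ?_⟩
    intro A₀ _ hl
    cases hl with
    | neut hn => exact absurd hn noNeut
  | k =>
    intro Γ₀ hΓ
    constructor
    · intro hn; cases hn
    · intro A₀ hA _; cases A₀ <;> simp [Ty.emb] at hA

/-- `A` is a left-nested iterated product of embedded Λ-types. -/
inductive IterProdEmb {ν : Type} : Tyx ν → Prop
  | single (A₀ : Ty ν) : IterProdEmb (Ty.emb A₀)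
  | cons {A : Tyx ν} (B₀ : Ty ν) : IterProdEmb A → IterProdEmb (.prod A (Ty.emb B₀))

lemma pnf_pure {ν : Type} :
    ∀ A : Tyx ν, PNF A → (∀ X Y : Tyx ν, A ≠ .prod X Y) → A ≠ .unit →
      ∃ A₀ : Ty ν, A = Ty.emb A₀ := by
  intro A
  induction A with
  | atom q => exact fun _ _ _ => ⟨.atom q, rfl⟩
  | unit => exact fun _ _ h => absurd rfl h
  | prod X Y _ _ => exact fun _ h _ => absurd rfl (h X Y)
  | arrow X Y ihX ihY =>
    intro h _ _
    obtain ⟨X₀, rfl⟩ := ihX (fun C hC => h _ (TyStep.arrL Y hC))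
      (fun P Q hPQ => h _ (by rw [hPQ]; exact TyStep.prodArr P Q Y))
      (fun hu => h _ (by rw [hu]; exact TyStep.unitArr Y))
    obtain ⟨Y₀, rfl⟩ := ihY (fun C hC => h _ (TyStep.arrR _ hC))
      (fun P Q hPQ => h _ (by rw [hPQ]; exact TyStep.arrProd _ P Q))
      (fun hu => h _ (by rw [hu]; exact TyStep.arrUnit _))
    exact ⟨.arrow X₀ Y₀, rfl⟩

lemma pnf_struct {ν : Type} : ∀ A : Tyx ν, PNF A → A = Tyx.unit ∨ IterProdEmb A := by
  intro A
  induction A with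
  | atom q => exact fun _ => Or.inr (IterProdEmb.single (.atom q))
  | unit => exact fun _ => Or.inl rfl
  | arrow X Y _ _ =>
    intro h
    obtain ⟨A₀, hA⟩ := pnf_pure _ h (fun _ _ h' => by cases h') (fun h' => by cases h')
    exact Or.inr (hA ▸ IterProdEmb.single A₀)
  | prod X Y ihX _ =>
    intro h
    have hX : PNF X := fun C hC => h _ (TyStep.prodL Y hC)
    have hY : PNF Y := fun C hC => h _ (TyStep.prodR X hC)
    obtain ⟨B₀, rfl⟩ := pnf_pure Y hY
      (fun P Q hPQ => h _ (by rw [hPQ]; exact TyStep.prodAssoc X P Q))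
      (fun hu => h _ (by rw [hu]; exact TyStep.prodUnit X))
    rcases ihX hX with rfl | hIter
    · exact absurd (h _ (TyStep.unitProd _)) (fun f => f)
    · exact Or.inr (IterProdEmb.cons B₀ hIter)

lemma iterProdEmb_lnf {ν : Type} :
    ∀ {A : Tyx ν}, IterProdEmb A → ∀ b : Tmx ([] : Ctxx ν) A, Lnf b → IterPairOfLam b := by
  intro A h
  induction h with
  | single A₀ =>
    intro b hb
    obtain ⟨b₀, hb₀⟩ := (key b [] rfl).2 A₀ rfl hb
    rw [eq_of_heq hb₀]
    exact .single b₀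
  | cons B₀ _ ih =>
    intro b hb
    cases hb with
    | pair h1 h2 =>
      obtain ⟨b₀, hb₀⟩ := (key _ [] rfl).2 B₀ rfl h2
      rw [eq_of_heq hb₀]
      exact .cons b₀ (ih _ h1)

/--
**Lemma 8.2.** Let `a` be a closed term of Λ× whose type `A` is in product normal form.
Then the expanded βη normal form `a^ν` of `a` (here: any long normal form `b` with
`a = b` provable in Λ×) is either of the form `Π_{i=1}^n a_i` with each `a_i` a term of
Λ, or it is the constant `k`.
-/
theorem long_normal_form_shape {ν : Type} {A : Tyx ν} (hA : PNF A)
    (a b : Tmx ([] : Ctxx ν) A) (hab : Eqvx a b) (hlnf : Lnf b) :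
    IterPairOfLam b ∨ IsK b := by
  rcases pnf_struct A hA with rfl | hIter
  · cases hlnf with
    | k => exact Or.inr IsK.k
  · exact Or.inl (iterProdEmb_lnf hIter b hlnf)
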